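/- arXiv:2309.12104 — 5 statements merged into one kernel-verified Lean document; each statement's English description precedes it below -/
import Mathlib

section
/- Let V be a vector space over a field of characteristic zero (or a module over a ℚ-algebra) with linear endomorphisms Q, K, d satisfying Q ∘ K − K ∘ Q = d and d ∘ K = K ∘ d. Let O ∈ V satisfy Q O = 0, and define O_p := (1/p!) K^p O for p ≥ 0. Then Q O_p = d O_{p−1} for every p ≥ 1. -/
/-- Every standard `K`-sequence of a `Q`-closed element is a descendant
sequence: if `Q ∘ K - K ∘ Q = d`, `d ∘ K = K ∘ d`, `Q O = 0`, and
`O_p = (1/p!) • K^p O`, then `Q O_p = d O_{p-1}` for all `p ≥ 1`. -/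
theorem standard_K_sequence_is_descendant
    {F V : Type*} [Field F] [CharZero F] [AddCommGroup V] [Module F V]
    (Q K d : Module.End F V)
    (h1 : Q * K - K * Q = d)
    (h2 : d * K = K * d)
    (O : V) (hO : Q O = 0)
    (Oseq : ℕ → V)
    (hOseq : ∀ p : ℕ, Oseq p = ((p.factorial : F)⁻¹) • (K ^ p) O) :
    ∀ p : ℕ, 1 ≤ p → Q (Oseq p) = d (Oseq (p - 1)) := by
  have hQK : Q * K = d + K * Q := sub_eq_iff_eq_add.mp h1
  have key : ∀ q : ℕ, Q ((K ^ (q + 1)) O) = (q + 1 : F) • d ((K ^ q) O) := by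
    intro q
    induction q with
    | zero =>
      have : (K ^ 1) O = K O := by simp
      rw [this, show Q (K O) = (Q * K) O from rfl, hQK]
      simp [hO]
    | succ n ih =>
      have hstep : (K ^ (n + 2)) O = K ((K ^ (n + 1)) O) := by
        rw [pow_succ']; rfl
      rw [hstep, show Q (K ((K ^ (n+1)) O)) = (Q * K) ((K ^ (n+1)) O) from rfl,
        hQK]
      simp only [LinearMap.add_apply, Module.End.mul_apply]
      rw [ih, map_smul]
      have hdk : d (K ((K ^ n) O)) = K (d ((K ^ n) O)) := by
        have := congrArg (fun f : Module.End F V => f ((K ^ n) O)) h2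
        simpa using this
      have hKd : K (d ((K ^ n) O)) = d ((K ^ (n + 1)) O) := by
        rw [← hdk]
        congr 1
        rw [pow_succ']; rfl
      rw [hKd]
      push_cast
      module
  intro p hp
  obtain ⟨q, rfl⟩ := Nat.exists_eq_add_of_le hp
  simp only [hOseq, map_smul, Nat.add_sub_cancel_left]
  rw [show 1 + q = q + 1 by ring, key q, smul_smul]
  congr 1
  have hq : ((q.factorial : F)) ≠ 0 := Nat.cast_ne_zero.mpr q.factorial_ne_zero
  have hq1 : (((q+1).factorial : F)) ≠ 0 := Nat.cast_ne_zero.mpr (q+1).factorial_ne_zero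
  field_simp
  rw [Nat.factorial_succ]
  push_cast
  ring
end

section
/- Let V be a vector space over a field of characteristic zero (or a module over a ℚ-algebra) with linear endomorphisms Q, K, d satisfying Q ∘ K − K ∘ Q = d and d ∘ K = K ∘ d. Let O ∈ V with Q O = 0, let n ≥ 1, and let W_1, …, W_n ∈ V with Q W_q = 0 for every q. Define O_0 := O and, for 1 ≤ p ≤ n, O_p := (1/p!) K^p O + Σ_{q=1}^{p} (1/(p−q)!) K^{p−q} W_q. Then Q O_p = d O_{p−1} for every 1 ≤ p ≤ n. -/
/-- Every general `K`-sequence of a `Q`-closed element is a descendant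
sequence: with `Q ∘ K - K ∘ Q = d`, `d ∘ K = K ∘ d`, `Q O = 0`, `Q W_q = 0`
for `1 ≤ q ≤ n`, and
`O_p = (1/p!) • K^p O + Σ_{q=1}^{p} (1/(p-q)!) • K^(p-q) (W q)` for `1 ≤ p ≤ n`
with `O_0 = O`, one has `Q O_p = d O_{p-1}` for all `1 ≤ p ≤ n`. -/
theorem general_K_sequence_is_descendant
    {F V : Type*} [Field F] [CharZero F] [AddCommGroup V] [Module F V]
    (Q K d : Module.End F V)
    (h1 : Q * K - K * Q = d)
    (h2 : d * K = K * d)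
    (O : V) (hO : Q O = 0)
    (n : ℕ) (hn : 1 ≤ n)
    (W : ℕ → V) (hW : ∀ q : ℕ, 1 ≤ q → q ≤ n → Q (W q) = 0)
    (Oseq : ℕ → V)
    (hO0 : Oseq 0 = O)
    (hOseq : ∀ p : ℕ, 1 ≤ p → p ≤ n →
      Oseq p = ((p.factorial : F)⁻¹) • (K ^ p) O +
        ∑ q ∈ Finset.Icc 1 p, (((p - q).factorial : F)⁻¹) • (K ^ (p - q)) (W q)) :
    ∀ p : ℕ, 1 ≤ p → p ≤ n → Q (Oseq p) = d (Oseq (p - 1)) := by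
  -- pointwise commutator on K w
  have hQK : ∀ w : V, Q (K w) = d w + K (Q w) := by
    intro w
    have := congrArg (fun f : Module.End F V => f w) h1
    simpa [Module.End.mul_apply, sub_eq_iff_eq_add] using this
  have hKd : ∀ w : V, K (d w) = d (K w) := by
    intro w
    have := congrArg (fun f : Module.End F V => f w) h2
    simpa [Module.End.mul_apply] using this.symm
  have key : ∀ (m : ℕ) (v : V), Q v = 0 →
      Q ((K ^ (m + 1)) v) = ((m + 1 : ℕ) : F) • d ((K ^ m) v) := by
    intro m
    induction m with
    | zero =>
      intro v hv
      simpa [hv] using hQK v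
    | succ m ih =>
      intro v hv
      have hp : (K ^ (m + 2)) v = K ((K ^ (m + 1)) v) := by
        rw [pow_succ', Module.End.mul_apply]
      rw [hp, hQK, ih v hv, map_smul, hKd]
      have hp3 : K ((K ^ m) v) = (K ^ (m + 1)) v := by
        rw [pow_succ', Module.End.mul_apply]
      rw [hp3]
      push_cast
      module
  have hfac : ∀ k : ℕ, (((k + 1).factorial : F)⁻¹) * ((k + 1 : ℕ) : F) = ((k.factorial : F)⁻¹) := by
    intro k
    have hk1 : ((k + 1 : ℕ) : F) ≠ 0 := Nat.cast_ne_zero.mpr (Nat.succ_ne_zero k)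
    have hkf : ((k.factorial : ℕ) : F) ≠ 0 := Nat.cast_ne_zero.mpr k.factorial_ne_zero
    rw [Nat.factorial_succ, Nat.cast_mul, mul_inv, mul_comm ((k + 1 : ℕ) : F)⁻¹,
      mul_assoc, inv_mul_cancel₀ hk1, mul_one]
  intro p hp1 hpn
  obtain ⟨m, rfl⟩ : ∃ m, p = m + 1 := ⟨p - 1, by omega⟩
  have hOm : Oseq m = ((m.factorial : F)⁻¹) • (K ^ m) O +
      ∑ q ∈ Finset.Icc 1 m, (((m - q).factorial : F)⁻¹) • (K ^ (m - q)) (W q) := by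
    rcases Nat.eq_zero_or_pos m with hm | hm
    · subst hm
      simp [hO0]
    · exact hOseq m hm (by omega)
  have hstep : Oseq (m + 1) = (((m + 1).factorial : F)⁻¹) • (K ^ (m + 1)) O +
      ∑ q ∈ Finset.Icc 1 (m + 1), (((m + 1 - q).factorial : F)⁻¹) • (K ^ (m + 1 - q)) (W q) :=
    hOseq (m + 1) (by omega) hpn
  simp only [Nat.add_sub_cancel]
  rw [hstep, hOm]
  rw [Finset.sum_Icc_succ_top (by omega : 1 ≤ m + 1)]
  simp only [Nat.sub_self, pow_zero, Nat.factorial_zero, Nat.cast_one, inv_one, one_smul,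
    Module.End.one_apply, map_add, map_smul, map_sum]
  rw [hW (m + 1) (by omega) hpn, key m O hO]
  have hsum : ∑ q ∈ Finset.Icc 1 m, (((m + 1 - q).factorial : F)⁻¹) • Q ((K ^ (m + 1 - q)) (W q))
      = ∑ q ∈ Finset.Icc 1 m, (((m - q).factorial : F)⁻¹) • d ((K ^ (m - q)) (W q)) := by
    apply Finset.sum_congr rfl
    intro q hq
    simp only [Finset.mem_Icc] at hq
    have hq1 : m + 1 - q = (m - q) + 1 := by omega
    rw [hq1, key (m - q) (W q) (hW q hq.1 (by omega))]
    rw [smul_smul, hfac]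
  rw [hsum, smul_smul, hfac]
  simp
end

section
/- Let V be a vector space over a field of characteristic zero (or a module over a ℚ-algebra) with linear endomorphisms Q, K, D such that K is nilpotent, Q ∘ K − K ∘ Q = D, and D ∘ K = K ∘ D. Define exp(±K) := Σ_{k≥0} (±K)^k / k! (finite sums). Then for every O ∈ V: Q O = D O if and only if Q(exp(−K) O) = 0; moreover exp(K)(exp(−K) O) = O. In particular, O ↦ exp(−K) O is a bijection between solutions of the descent-type equation Q O = D O and Q-closed elements, with inverse W ↦ exp(K) W. -/
/-- The finite exponential sum `exp(N) = Σ_{k} N^k / k!` of a nilpotent element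
`N` with `N ^ m = 0` in an algebra over a field of characteristic zero. -/
noncomputable def nilExpSum (F : Type*) {R : Type*} [Field F] [Ring R] [Algebra F R]
    (N : R) (m : ℕ) : R :=
  ∑ k ∈ Finset.range (m + 1), ((k.factorial : F)⁻¹) • N ^ k

/-!
Conjugating `Q` by `exp(-K)` shifts it by the commutator: since `[Q, K] = D` commutes with `K`,
`Q N^(k+1) = N^(k+1) Q + (k+1) N^k C` for `N = -K`, `C = -D`, and summing the exponential series
gives `Q ∘ exp(-K) = exp(-K) ∘ (Q - D)`. As `exp(-K)` is invertible with inverse `exp(K)`,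
`(Q - D) O = 0` exactly when `Q (exp(-K) O) = 0`.
-/

open Finset

theorem mul_pow_succ_eq_of_commutator {A : Type*} [Ring A] {Q N C : A}
    (hQN : Q * N - N * Q = C) (hNC : Commute N C) (k : ℕ) :
    Q * N ^ (k + 1) = N ^ (k + 1) * Q + (k + 1) • (N ^ k * C) := by
  induction k with
  | zero => simp [← hQN]
  | succ k ih =>
    have hCN : N ^ (k + 1) * C = N ^ k * C * N := by
      rw [mul_assoc, ← hNC.eq, ← mul_assoc, pow_succ]
    calc Q * N ^ (k + 1 + 1) = (Q * N ^ (k + 1)) * N := by rw [pow_succ _ (k + 1), mul_assoc]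
      _ = N ^ (k + 1) * (Q * N) + (k + 1) • (N ^ k * C * N) := by
        rw [ih, add_mul, smul_mul_assoc, mul_assoc]
      _ = N ^ (k + 1 + 1) * Q + (k + 1 + 1) • (N ^ (k + 1) * C) := by
        rw [← sub_add_cancel (Q * N) (N * Q), hQN, ← hCN, succ_nsmul _ (k + 1)]
        noncomm_ring

namespace IsNilpotent

variable {A : Type*} [Ring A] [Module ℚ A]

theorem mul_exp_eq_exp_mul_add {Q N C : A} (hN : IsNilpotent N) (hQN : Q * N - N * Q = C)
    (hNC : Commute N C) : Q * exp N = exp N * (Q + C) := by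
  obtain ⟨n, hn⟩ := hN
  have hshift (k : ℕ) : ((k + 1).factorial : ℚ)⁻¹ • (Q * N ^ (k + 1) - N ^ (k + 1) * Q) =
      (k.factorial : ℚ)⁻¹ • N ^ k * C := by
    rw [mul_pow_succ_eq_of_commutator hQN hNC, add_sub_cancel_left, ← Nat.cast_smul_eq_nsmul ℚ,
      smul_smul, smul_mul_assoc, Nat.factorial_succ, Nat.cast_mul]
    congr 1
    field_simp
  have hcomm : Q * exp N - exp N * Q = exp N * C := calc
    Q * exp N - exp N * Q
        = ∑ k ∈ range (n + 1), (k.factorial : ℚ)⁻¹ • (Q * N ^ k - N ^ k * Q) := by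
      rw [exp_eq_sum (pow_eq_zero_of_le n.le_succ hn), mul_sum, sum_mul, ← sum_sub_distrib]
      simp only [mul_smul_comm, smul_mul_assoc, smul_sub]
    _ = ∑ k ∈ range n, (k.factorial : ℚ)⁻¹ • N ^ k * C := by
      simp only [sum_range_succ', hshift, pow_zero, one_mul, mul_one, sub_self, smul_zero, add_zero]
    _ = exp N * C := by rw [exp_eq_sum hn, sum_mul]
  rw [mul_add, ← hcomm, add_sub_cancel]

end IsNilpotent

open IsNilpotent

theorem nilExpSum_eq_exp {F R : Type*} [Field F] [Ring R] [Algebra F R] [Module ℚ R] {N : R}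
    {m : ℕ} (hN : N ^ m = 0) : nilExpSum F N m = exp N := by
  simp only [nilExpSum, exp_eq_sum (pow_eq_zero_of_le m.le_succ hN), inv_natCast_smul_eq F ℚ]

/-- Descendant sequences are `exp(K)`-images of `Q`-closed elements: with `K`
nilpotent, `Q ∘ K - K ∘ Q = D`, and `D ∘ K = K ∘ D`, an element `O` solves the
descent-type equation `Q O = D O` iff `exp(-K) O` is `Q`-closed; moreover
`exp(K) (exp(-K) O) = O`, so `O ↦ exp(-K) O` is a bijection between solutions
of `Q O = D O` and `Q`-closed elements, with inverse `W ↦ exp(K) W`. -/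
theorem descent_solutions_bijection
    {F V : Type*} [Field F] [CharZero F] [AddCommGroup V] [Module F V]
    (Q K D : Module.End F V) (m : ℕ) (hm : K ^ m = 0)
    (h1 : Q * K - K * Q = D)
    (h2 : D * K = K * D) :
    ∀ O : V,
      (Q O = D O ↔ Q (nilExpSum F (-K) m O) = 0) ∧
      nilExpSum F K m (nilExpSum F (-K) m O) = O := by
  let _ : Module ℚ V := Module.compHom V (algebraMap ℚ F)
  have hK : IsNilpotent K := ⟨m, hm⟩
  have hnegK : (-K) ^ m = 0 := by rw [neg_pow, hm, mul_zero]
  have hconj : Q * exp (-K) = exp (-K) * (Q - D) := by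
    rw [sub_eq_add_neg]
    refine mul_exp_eq_exp_mul_add hK.neg ?_ ?_
    · rw [← h1]; noncomm_ring
    · exact (Commute.symm h2).neg_left.neg_right
  have hinj : Function.Injective ⇑(exp (-K) : Module.End F V) :=
    (Module.End.isUnit_iff _).1 (isUnit_exp hK.neg) |>.injective
  intro O
  rw [nilExpSum_eq_exp hm, nilExpSum_eq_exp hnegK]
  refine ⟨?_, by rw [← Module.End.mul_apply, exp_mul_exp_neg_self hK, Module.End.one_apply]⟩
  calc Q O = D O ↔ (Q - D) O = 0 := by rw [LinearMap.sub_apply, sub_eq_zero]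
    _ ↔ exp (-K) ((Q - D) O) = 0 := (map_eq_zero_iff _ hinj).symm
    _ ↔ Q (exp (-K) O) = 0 := by rw [← Module.End.mul_apply, ← hconj, Module.End.mul_apply]
end

section
/- Let M be a module over a commutative ring with linear endomorphisms d_h, d_v, ι satisfying ι ∘ d_h = d_h ∘ ι, and let Lie := ι ∘ d_v + d_v ∘ ι. Suppose L, EL, γ, α ∈ M satisfy ι(L) = 0, Lie(L) = d_h(α), and d_v(L) = EL + d_h(γ). Then the element j := α − ι(γ) satisfies d_h(j) = ι(EL). -/
/-- Noether's theorem in the variational bicomplex setting: if `ι L = 0`,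
`Lie L = d_h α` (with `Lie = ι ∘ d_v + d_v ∘ ι`), and `d_v L = EL + d_h γ`,
then the Noether current `j = α - ι γ` satisfies `d_h j = ι EL`. -/
theorem noether_current
    {R M : Type*} [CommRing R] [AddCommGroup M] [Module R M]
    (dh dv ι : Module.End R M)
    (hcomm : ι * dh = dh * ι)
    (Lie : Module.End R M) (hLie : Lie = ι * dv + dv * ι)
    (L EL γ α : M)
    (hιL : ι L = 0)
    (hLieL : Lie L = dh α)
    (hdvL : dv L = EL + dh γ) :
    dh (α - ι γ) = ι EL := by
  have h1 : dh α = ι EL + dh (ι γ) := by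
    have := hLieL
    rw [hLie] at this
    simp only [LinearMap.add_apply, Module.End.mul_apply, hιL, map_zero, add_zero, hdvL,
      map_add] at this
    have hc : ι (dh γ) = dh (ι γ) := by
      have := congrArg (fun f => f γ) hcomm
      simpa using this
    rw [hc] at this
    exact this ▸ rfl
  rw [map_sub, h1]
  abel
end

section
/- Let M be a module over a commutative ring with linear endomorphisms d_h, d_v, ι satisfying d_h ∘ d_h = 0, d_v ∘ d_v = 0, d_h ∘ d_v = d_v ∘ d_h, and d_h ∘ ι = ι ∘ d_h; set Lie := ι ∘ d_v − d_v ∘ ι. Suppose ω, ω', γ', γ'', L, L' ∈ M satisfy: ω' = d_v(γ'), Lie(ω) = −d_h(ω'), ι(Lie(ω)) = Lie(ι(ω)), ι(ω) = d_v(L) + d_h(γ'), and ι(ω') = d_v(L') + d_h(γ''). Then d_v( Lie(L) − d_h(2L' − ι(γ')) ) = 0. -/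
/-- Algebraic core of the proposition that `Q` is a symmetry of each Lagrangian
in an extended BV-BFV Lagrangian field theory:
`Lie L - d_h (2 L' - ι γ')` is `d_v`-closed. -/
theorem extended_bvbfv_symmetry
    {R M : Type*} [CommRing R] [AddCommGroup M] [Module R M]
    (dh dv ι : Module.End R M)
    (hdh : dh * dh = 0) (hdv : dv * dv = 0)
    (hhv : dh * dv = dv * dh)
    (hιh : dh * ι = ι * dh)
    (Lie : Module.End R M) (hLie : Lie = ι * dv - dv * ι)
    (ω ω' γ' γ'' L L' : M)
    (h1 : ω' = dv γ')
    (h2 : Lie ω = -(dh ω'))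
    (h3 : ι (Lie ω) = Lie (ι ω))
    (h4 : ι ω = dv L + dh γ')
    (h5 : ι ω' = dv L' + dh γ'') :
    dv (Lie L - dh ((2 : ℕ) • L' - ι γ')) = 0 := by
  have Hdh : ∀ x, dh (dh x) = 0 := fun x => by
    simpa [Module.End.mul_apply] using LinearMap.ext_iff.mp hdh x
  have Hdv : ∀ x, dv (dv x) = 0 := fun x => by
    simpa [Module.End.mul_apply] using LinearMap.ext_iff.mp hdv x
  have Hhv : ∀ x, dh (dv x) = dv (dh x) := fun x => by
    simpa [Module.End.mul_apply] using LinearMap.ext_iff.mp hhv x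
  have Hιh : ∀ x, dh (ι x) = ι (dh x) := fun x => by
    simpa [Module.End.mul_apply] using LinearMap.ext_iff.mp hιh x
  have HLie : ∀ x, Lie x = ι (dv x) - dv (ι x) := fun x => by
    rw [hLie]; simp [Module.End.mul_apply]
  -- dv (ι ω) = dh ω'
  have e1 : dv (ι ω) = dh ω' := by
    rw [h4, map_add, Hdv, zero_add, h1, Hhv]
  -- dv L = ι ω - dh γ'
  have e0 : dv L = ι ω - dh γ' := eq_sub_iff_add_eq.mpr h4.symm
  -- ι (dh ω') = dh (dv L')
  have e3 : ι (dh ω') = dh (dv L') := by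
    rw [← Hιh, h5, map_add, Hdh, add_zero]
  -- dv (ι (ι ω)) = ι (dh ω') + ι (dh ω')
  have e2 : dv (ι (ι ω)) = ι (dh ω') + ι (dh ω') := by
    have h := h3
    rw [h2, map_neg, HLie (ι ω), e1] at h
    -- h : -(ι (dh ω')) = ι (dh ω') - dv (ι (ι ω))
    have h' : dv (ι (ι ω)) - ι (dh ω') = ι (dh ω') := by
      rw [← neg_sub (ι (dh ω')) (dv (ι (ι ω))), ← h, neg_neg]
    exact sub_eq_iff_eq_add.mp h'
  -- main computation
  rw [HLie L, map_sub, map_sub, Hdv, sub_zero, e0, map_sub, map_sub, e2, e3,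
    ← Hιh γ', ← Hhv (ι γ'), ← Hhv, map_sub dv, map_nsmul, map_sub dh, map_nsmul]
  abel
end
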